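/- For the connection ρ(T_ν) = Σ_μ b_μ* L_{μ,ν} on the instanton bundle, the horizontal lifts satisfy [ρ(T_μ), ρ(T_ν)] = L_{μ,ν}, and consequently the curvature on the generators is −Ω(T_μ, T_ν) = ω(L_{μ,ν}) = L_{μ,ν} − (b_μ ρ(T_ν) − λ^{2μ∧ν} b_ν ρ(T_μ)) = Y_{μ,ν}, the generators of the braided Lie algebra of vertical (gauge) derivations. -/

import Mathlib

/-!
Composing two horizontal lifts `ρ(T_μ) ρ(T_ν) = Σ_{γ,δ} b_γ* L_{γ,μ} b_δ* L_{δ,ν}` and moving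
`L_{γ,μ}` past the left multiplication by `b_δ*` with the braided Leibniz rule splits the product
into a first-order part, in which `L` acts on the generators and the sphere relation
`Σ b_γ* b_γ = 1` collapses the sums to `L_{μ,ν} − b_μ ρ(T_ν)`, and a second-order part with two
`L`'s. In the braided commutator the second-order parts pair up into braided commutators
`[L_{γ,μ}, L_{δ,ν}]`, which the `so_θ(5)` relations reduce to single `L`'s; contracting the
Kronecker deltas leaves `b_μ ρ(T_ν) − L_{μ,ν} − λ^{2μ∧ν} b_ν ρ(T_μ)` (the term with `δ_{ν,−μ}` is
the contraction of a braided-symmetric with a braided-antisymmetric tensor, hence zero), and the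
total is `L_{μ,ν}`. The formula for `Y_{μ,ν}` is the first-order computation once more, and the
curvature is the difference of the two.
-/

noncomputable section

open scoped BigOperators

namespace Statement9

/-- the five weights `{(0,0),(±1,0),(0,±1)}` -/
def V : Finset (ℤ × ℤ) := {(0,0), (1,0), (-1,0), (0,1), (0,-1)}

/-- `μ∧ν := μ₁ν₂ − μ₂ν₁` -/
def wedge (p r : ℤ × ℤ) : ℤ := p.1 * r.2 - p.2 * r.1

/-- `λ^{2 μ∧ν}` with `λ = e^{−πiθ}` -/
def q (θ : ℝ) (p r : ℤ × ℤ) : ℂ :=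
  Complex.exp (-((Real.pi : ℂ) * Complex.I) * (θ : ℂ) * ((2 * wedge p r : ℤ) : ℂ))

/-- the doubled weight `2μ` (the generators `z_r` of `O(S^7_θ)` have
half-integral weights, so the grading uses doubled weights) -/
def dbl (p : ℤ × ℤ) : ℤ × ℤ := (2 * p.1, 2 * p.2)

/-- the braiding factor between homogeneous elements of (doubled) weights
`m`, `m'`; on the subalgebra `O(S^4_θ)`, `Q7 θ (dbl μ) (dbl ν) = λ^{2μ∧ν}`. -/
def Q7 (θ : ℝ) (m m' : ℤ × ℤ) : ℂ :=
  Complex.exp (-((Real.pi : ℂ) * Complex.I) * (θ : ℂ) * (((wedge m m' : ℤ) : ℂ) / 2))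

theorem _root_.Finset.sum_sum_eq_zero_of_swap_eq_neg {ι M : Type*} [AddCommGroup M]
    [IsAddTorsionFree M] (s : Finset ι) (f : ι → ι → M)
    (h : ∀ i ∈ s, ∀ j ∈ s, f j i = -f i j) : ∑ i ∈ s, ∑ j ∈ s, f i j = 0 := by
  set S := ∑ i ∈ s, ∑ j ∈ s, f i j
  have hS : S = -S := by
    calc S = ∑ j ∈ s, ∑ i ∈ s, f i j := Finset.sum_comm
      _ = -S := by
        simp only [S, ← Finset.sum_neg_distrib]
        exact Finset.sum_congr rfl fun j hj => Finset.sum_congr rfl fun i hi => h j hj i hi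
  apply nsmul_right_injective (M := M) two_ne_zero
  simp only [two_nsmul, smul_zero]
  exact eq_neg_iff_add_eq_zero.mp hS

theorem _root_.LinearMap.mulLeft_eq_lmul {R A : Type*} [CommSemiring R] [Semiring A]
    [Algebra R A] (x : A) : LinearMap.mulLeft R x = Algebra.lmul R A x :=
  rfl

theorem _root_.Module.End.mul_lmul_of_map_mul {R A : Type*} [CommSemiring R] [Semiring A]
    [Algebra R A] {D : Module.End R A} {x : A} {c : R}
    (h : ∀ y, D (x * y) = D x * y + c • (x * D y)) :
    D * Algebra.lmul R A x = Algebra.lmul R A (D x) + c • (Algebra.lmul R A x * D) :=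
  LinearMap.ext h

/-- `λ^{2n}` -/
def qexp (θ : ℝ) (n : ℤ) : ℂ :=
  Complex.exp (-((Real.pi : ℂ) * Complex.I) * (θ : ℂ) * ((2 * n : ℤ) : ℂ))

theorem q_eq_qexp (θ : ℝ) (p r : ℤ × ℤ) : q θ p r = qexp θ (wedge p r) := rfl

theorem qexp_add (θ : ℝ) (m n : ℤ) : qexp θ (m + n) = qexp θ m * qexp θ n := by
  simp only [qexp, ← Complex.exp_add]
  push_cast
  ring_nf

theorem qexp_zero (θ : ℝ) : qexp θ 0 = 1 := by
  simp [qexp]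

theorem q_congr {θ : ℝ} {p r p' r' : ℤ × ℤ} (h : wedge p r = wedge p' r') :
    q θ p r = q θ p' r' := by
  rw [q_eq_qexp, h, ← q_eq_qexp]

theorem q_mul_q {θ : ℝ} {p r p' r' s t : ℤ × ℤ} (h : wedge p r + wedge p' r' = wedge s t) :
    q θ p r * q θ p' r' = q θ s t := by
  rw [q_eq_qexp, q_eq_qexp, ← qexp_add, h, ← q_eq_qexp]

theorem q_mul_q_eq_one {θ : ℝ} {p r p' r' : ℤ × ℤ} (h : wedge p r + wedge p' r' = 0) :
    q θ p r * q θ p' r' = 1 := by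
  rw [q_eq_qexp, q_eq_qexp, ← qexp_add, h, qexp_zero]

theorem Q7_dbl_add_dbl (θ : ℝ) (p r s : ℤ × ℤ) :
    Q7 θ (dbl p + dbl r) (dbl s) = q θ (p + r) s := by
  simp only [Q7, q, dbl, wedge, Prod.fst_add, Prod.snd_add]
  push_cast
  ring_nf

theorem neg_mem_V : ∀ μ ∈ V, -μ ∈ V := by decide

section Instanton

variable {θ : ℝ} {A : Type*} [Ring A] [Algebra ℂ A] {b : ℤ × ℤ → A}
  {L : ℤ × ℤ → ℤ × ℤ → Module.End ℂ A}

local notation "ℓ" => Algebra.lmul ℂ A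

variable (b L) in
def connection (ν : ℤ × ℤ) : Module.End ℂ A := ∑ μ ∈ V, ℓ (b (-μ)) * L μ ν

theorem sum_lmul_neg_mul_lmul (hsph : ∑ μ ∈ V, b (-μ) * b μ = 1) :
    ∑ μ ∈ V, ℓ (b (-μ)) * ℓ (b μ) = 1 := by
  simp only [← map_mul, ← map_sum, hsph, map_one]

theorem lmul_mul_connection (hcomm : ∀ μ ∈ V, ∀ ν ∈ V, b μ * b ν = q θ μ ν • (b ν * b μ))
    {τ : ℤ × ℤ} (hτ : τ ∈ V) (ν : ℤ × ℤ) :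
    ℓ (b τ) * connection b L ν = ∑ γ ∈ V, q θ γ τ • (ℓ (b (-γ)) * ℓ (b τ) * L γ ν) := by
  rw [connection, Finset.mul_sum]
  refine Finset.sum_congr rfl fun γ hγ => ?_
  rw [← map_mul, hcomm (-γ) (neg_mem_V γ hγ) τ hτ, map_smul, smul_mul_assoc, smul_smul,
    q_mul_q_eq_one (by simp [wedge]), one_smul, map_mul, mul_assoc]

theorem sum_lmul_neg_mul_sub (hsph : ∑ μ ∈ V, b (-μ) * b μ = 1)
    (hcomm : ∀ μ ∈ V, ∀ ν ∈ V, b μ * b ν = q θ μ ν • (b ν * b μ))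
    {μ : ℤ × ℤ} (hμ : μ ∈ V) (ν : ℤ × ℤ) :
    ∑ γ ∈ V, ℓ (b (-γ)) * (ℓ (b γ) * L μ ν - q θ γ μ • (ℓ (b μ) * L γ ν)) =
      L μ ν - ℓ (b μ) * connection b L ν := by
  simp only [mul_sub, mul_smul_comm, ← mul_assoc, Finset.sum_sub_distrib, ← Finset.sum_mul,
    sum_lmul_neg_mul_lmul hsph, one_mul, lmul_mul_connection hcomm hμ]

theorem sub_lmul_mul_connection_eq_sum (hsph : ∑ μ ∈ V, b (-μ) * b μ = 1)
    (hcomm : ∀ μ ∈ V, ∀ ν ∈ V, b μ * b ν = q θ μ ν • (b ν * b μ))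
    {μ ν : ℤ × ℤ} (hμ : μ ∈ V) (hν : ν ∈ V) :
    L μ ν - (ℓ (b μ) * connection b L ν - q θ μ ν • (ℓ (b ν) * connection b L μ)) =
      ∑ γ ∈ V, ℓ (b (-γ)) * (ℓ (b γ) * L μ ν - q θ γ μ • (ℓ (b μ) * L γ ν)
        + q θ (γ + μ) ν • (ℓ (b ν) * L γ μ)) := by
  have hcoeff : ∀ γ, q θ (γ + μ) ν = q θ μ ν * q θ γ ν := fun γ =>
    (q_mul_q (by simp [wedge]; ring)).symm
  simp only [mul_add, Finset.sum_add_distrib, sum_lmul_neg_mul_sub hsph hcomm hμ, hcoeff,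
    mul_smul_comm, ← mul_assoc, ← smul_smul, ← Finset.smul_sum, lmul_mul_connection hcomm hν]
  abel

theorem L_mul_lmul {𝒜 : ℤ × ℤ → Submodule ℂ A} (hb : ∀ μ ∈ V, b μ ∈ 𝒜 (dbl μ))
    (hLeib : ∀ μ ∈ V, ∀ ν ∈ V, ∀ (m : ℤ × ℤ) (x y : A), x ∈ 𝒜 m →
      L μ ν (x * y) = L μ ν x * y + Q7 θ (dbl μ + dbl ν) m • (x * L μ ν y))
    {γ μ δ : ℤ × ℤ} (hγ : γ ∈ V) (hμ : μ ∈ V) (hδ : δ ∈ V) :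
    L γ μ * ℓ (b δ) = ℓ (L γ μ (b δ)) + q θ (γ + μ) δ • (ℓ (b δ) * L γ μ) :=
  Module.End.mul_lmul_of_map_mul fun y => by
    rw [hLeib γ hγ μ hμ _ _ y (hb δ hδ), Q7_dbl_add_dbl]

theorem sum_lmul_L_apply_mul (hLval : ∀ μ ∈ V, ∀ ν ∈ V, ∀ σ ∈ V,
      L μ ν (b σ) = (if σ = -ν then (1:ℂ) else 0) • b μ
        - q θ μ ν • ((if σ = -μ then (1:ℂ) else 0) • b ν))
    {γ μ : ℤ × ℤ} (hγ : γ ∈ V) (hμ : μ ∈ V) (ν : ℤ × ℤ) :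
    ∑ δ ∈ V, ℓ (L γ μ (b (-δ))) * L δ ν = ℓ (b γ) * L μ ν - q θ γ μ • (ℓ (b μ) * L γ ν) := by
  rw [Finset.sum_congr rfl fun δ hδ => by rw [hLval γ hγ μ hμ (-δ) (neg_mem_V δ hδ)]]
  simp only [neg_inj, ite_smul, one_smul, zero_smul, map_sub, map_smul, apply_ite ℓ, map_zero,
    sub_mul, smul_mul_assoc, ite_mul, zero_mul, Finset.sum_sub_distrib, ← Finset.smul_sum,
    Finset.sum_ite_eq', hμ, hγ, if_true]

variable (θ b L) in
def secondOrderPart (μ ν : ℤ × ℤ) : Module.End ℂ A :=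
  ∑ γ ∈ V, ∑ δ ∈ V, q θ (γ + μ) (-δ) • (ℓ (b (-γ)) * ℓ (b (-δ)) * (L γ μ * L δ ν))

theorem connection_mul_connection {𝒜 : ℤ × ℤ → Submodule ℂ A}
    (hb : ∀ μ ∈ V, b μ ∈ 𝒜 (dbl μ))
    (hcomm : ∀ μ ∈ V, ∀ ν ∈ V, b μ * b ν = q θ μ ν • (b ν * b μ))
    (hsph : ∑ μ ∈ V, b (-μ) * b μ = 1)
    (hLval : ∀ μ ∈ V, ∀ ν ∈ V, ∀ σ ∈ V,
      L μ ν (b σ) = (if σ = -ν then (1:ℂ) else 0) • b μ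
        - q θ μ ν • ((if σ = -μ then (1:ℂ) else 0) • b ν))
    (hLeib : ∀ μ ∈ V, ∀ ν ∈ V, ∀ (m : ℤ × ℤ) (x y : A), x ∈ 𝒜 m →
      L μ ν (x * y) = L μ ν x * y + Q7 θ (dbl μ + dbl ν) m • (x * L μ ν y))
    {μ : ℤ × ℤ} (hμ : μ ∈ V) (ν : ℤ × ℤ) :
    connection b L μ * connection b L ν =
      L μ ν - ℓ (b μ) * connection b L ν + secondOrderPart θ b L μ ν := by
  have hsplit : ∀ γ ∈ V, ∑ δ ∈ V, ℓ (b (-γ)) * L γ μ * (ℓ (b (-δ)) * L δ ν) =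
      ℓ (b (-γ)) * (ℓ (b γ) * L μ ν - q θ γ μ • (ℓ (b μ) * L γ ν)) +
        ∑ δ ∈ V, q θ (γ + μ) (-δ) • (ℓ (b (-γ)) * ℓ (b (-δ)) * (L γ μ * L δ ν)) := by
    intro γ hγ
    rw [← sum_lmul_L_apply_mul hLval hγ hμ ν, Finset.mul_sum, ← Finset.sum_add_distrib]
    refine Finset.sum_congr rfl fun δ hδ => ?_
    rw [← mul_assoc, mul_assoc _ (L γ μ), L_mul_lmul hb hLeib hγ hμ (neg_mem_V δ hδ)]
    simp only [mul_add, add_mul, mul_smul_comm, smul_mul_assoc, mul_assoc]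
  calc connection b L μ * connection b L ν
      = ∑ γ ∈ V, ∑ δ ∈ V, ℓ (b (-γ)) * L γ μ * (ℓ (b (-δ)) * L δ ν) :=
        Finset.sum_mul_sum _ _ _ _
    _ = _ := by
      rw [Finset.sum_congr rfl hsplit, Finset.sum_add_distrib, sum_lmul_neg_mul_sub hsph hcomm hμ,
        secondOrderPart]

theorem sum_sum_smul_lmul_mul_L_eq_zero
    (hcomm : ∀ μ ∈ V, ∀ ν ∈ V, b μ * b ν = q θ μ ν • (b ν * b μ))
    (hanti : ∀ μ ∈ V, ∀ ν ∈ V, L μ ν = -(q θ μ ν) • L ν μ) :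
    ∑ γ ∈ V, ∑ δ ∈ V, q θ δ γ • (ℓ (b (-γ)) * ℓ (b (-δ)) * L γ δ) = 0 := by
  have := IsAddTorsionFree.of_isTorsionFree ℂ (Module.End ℂ A)
  refine Finset.sum_sum_eq_zero_of_swap_eq_neg V _ fun γ hγ δ hδ => ?_
  rw [← map_mul, hcomm (-δ) (neg_mem_V δ hδ) (-γ) (neg_mem_V γ hγ), hanti δ hδ γ hγ, map_smul,
    map_mul, smul_mul_assoc, mul_smul_comm, smul_smul, smul_smul, mul_neg, neg_smul,
    q_mul_q_eq_one (by simp [wedge]; ring), one_mul]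

theorem smul_secondOrderPart_swap
    (hcomm : ∀ μ ∈ V, ∀ ν ∈ V, b μ * b ν = q θ μ ν • (b ν * b μ)) (μ ν : ℤ × ℤ) :
    q θ μ ν • secondOrderPart θ b L ν μ = ∑ γ ∈ V, ∑ δ ∈ V, q θ (γ + μ) (-δ) •
      (q θ (γ + μ) (δ + ν) • (ℓ (b (-γ)) * ℓ (b (-δ)) * (L δ ν * L γ μ))) := by
  rw [secondOrderPart, Finset.sum_comm, Finset.smul_sum]
  refine Finset.sum_congr rfl fun γ hγ => ?_
  rw [Finset.smul_sum]
  refine Finset.sum_congr rfl fun δ hδ => ?_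
  rw [← map_mul, hcomm (-δ) (neg_mem_V δ hδ) (-γ) (neg_mem_V γ hγ), map_smul, map_mul,
    smul_mul_assoc, smul_smul, smul_smul, smul_smul]
  congr 1
  simp only [q_eq_qexp, ← qexp_add]
  exact congrArg _ (by simp [wedge]; ring)

theorem secondOrderPart_sub_smul_swap
    (hcomm : ∀ μ ∈ V, ∀ ν ∈ V, b μ * b ν = q θ μ ν • (b ν * b μ)) (μ ν : ℤ × ℤ) :
    secondOrderPart θ b L μ ν - q θ μ ν • secondOrderPart θ b L ν μ =
      ∑ γ ∈ V, ∑ δ ∈ V, q θ (γ + μ) (-δ) • (ℓ (b (-γ)) * ℓ (b (-δ)) *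
        (L γ μ * L δ ν - q θ (γ + μ) (δ + ν) • (L δ ν * L γ μ))) := by
  rw [smul_secondOrderPart_swap hcomm, secondOrderPart, ← Finset.sum_sub_distrib]
  refine Finset.sum_congr rfl fun γ _ => ?_
  rw [← Finset.sum_sub_distrib]
  refine Finset.sum_congr rfl fun δ _ => ?_
  rw [mul_sub, mul_smul_comm, smul_sub]

theorem sum_sum_smul_lmul_mul_braided_commutator
    (hcomm : ∀ μ ∈ V, ∀ ν ∈ V, b μ * b ν = q θ μ ν • (b ν * b μ))
    (hsph : ∑ μ ∈ V, b (-μ) * b μ = 1)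
    (hanti : ∀ μ ∈ V, ∀ ν ∈ V, L μ ν = -(q θ μ ν) • L ν μ)
    (hLrel : ∀ μ ∈ V, ∀ ν ∈ V, ∀ τ ∈ V, ∀ σ ∈ V,
      L μ ν * L τ σ - q θ (μ + ν) (τ + σ) • (L τ σ * L μ ν)
        = (if τ = -ν then (1:ℂ) else 0) • L μ σ
          - q θ μ ν • ((if τ = -μ then (1:ℂ) else 0) • L ν σ)
          - q θ τ σ • ((if σ = -ν then (1:ℂ) else 0) • L μ τ
              - q θ μ ν • ((if σ = -μ then (1:ℂ) else 0) • L ν τ)))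
    {μ ν : ℤ × ℤ} (hμ : μ ∈ V) (hν : ν ∈ V) :
    ∑ γ ∈ V, ∑ δ ∈ V, q θ (γ + μ) (-δ) • (ℓ (b (-γ)) * ℓ (b (-δ)) *
        (L γ μ * L δ ν - q θ (γ + μ) (δ + ν) • (L δ ν * L γ μ))) =
      ℓ (b μ) * connection b L ν - L μ ν - q θ μ ν • (ℓ (b ν) * connection b L μ) := by
  rw [Finset.sum_congr rfl fun γ hγ => Finset.sum_congr rfl fun δ hδ => by
    rw [hLrel γ hγ μ hμ δ hδ ν hν]]
  have hiff : ∀ γ : ℤ × ℤ, ν = -γ ↔ γ = -ν := fun γ => by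
    constructor <;> rintro rfl <;> rw [neg_neg]
  simp only [mul_sub, smul_sub, mul_smul_comm, smul_smul, Finset.sum_sub_distrib, ite_smul,
    one_smul, zero_smul, mul_ite, mul_zero, smul_ite, smul_zero, Finset.sum_ite_irrel,
    Finset.sum_const_zero, hiff, Finset.sum_ite_eq', neg_mem_V μ hμ, neg_mem_V ν hν, if_true,
    neg_neg]
  have hρν : ∑ γ ∈ V, q θ (γ + μ) μ • (ℓ (b (-γ)) * ℓ (b μ) * L γ ν) =
      ℓ (b μ) * connection b L ν := by
    rw [lmul_mul_connection hcomm hμ]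
    exact Finset.sum_congr rfl fun γ _ => congrArg (· • _) (q_congr (by simp [wedge]; ring))
  have hsphere : ∑ γ ∈ V, (if -γ ∈ V then (q θ (γ + μ) γ * q θ γ μ) •
      (ℓ (b (-γ)) * ℓ (b γ) * L μ ν) else 0) = L μ ν := by
    rw [Finset.sum_congr rfl fun γ hγ => by
      rw [if_pos (neg_mem_V γ hγ), q_mul_q_eq_one (by simp [wedge]; ring), one_smul],
      ← Finset.sum_mul, sum_lmul_neg_mul_lmul hsph, one_mul]
  have hantisymm : (if μ = -ν then ∑ γ ∈ V, ∑ δ ∈ V, (q θ (γ + μ) (-δ) * q θ δ ν) •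
      (ℓ (b (-γ)) * ℓ (b (-δ)) * L γ δ) else 0) = 0 := by
    split_ifs with hμν
    · subst hμν
      rw [← sum_sum_smul_lmul_mul_L_eq_zero hcomm hanti]
      exact Finset.sum_congr rfl fun γ _ => Finset.sum_congr rfl fun δ _ =>
        congrArg (· • _) (q_mul_q (by simp [wedge]; ring))
    · rfl
  have hρμ : ∑ δ ∈ V, (q θ (-ν + μ) (-δ) * (q θ δ ν * q θ (-ν) μ)) •
      (ℓ (b ν) * ℓ (b (-δ)) * L μ δ) = -(q θ μ ν • (ℓ (b ν) * connection b L μ)) := by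
    rw [connection, Finset.mul_sum, Finset.smul_sum, ← Finset.sum_neg_distrib]
    refine Finset.sum_congr rfl fun δ hδ => ?_
    rw [hanti μ hμ δ hδ, mul_smul_comm, smul_smul, ← neg_smul, mul_assoc]
    congr 1
    simp only [mul_neg, neg_inj, q_eq_qexp, ← qexp_add]
    exact congrArg _ (by simp [wedge]; ring)
  rw [hρν, hsphere, hantisymm, hρμ]
  abel

theorem connection_commutator {𝒜 : ℤ × ℤ → Submodule ℂ A}
    (hb : ∀ μ ∈ V, b μ ∈ 𝒜 (dbl μ))
    (hcomm : ∀ μ ∈ V, ∀ ν ∈ V, b μ * b ν = q θ μ ν • (b ν * b μ))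
    (hsph : ∑ μ ∈ V, b (-μ) * b μ = 1)
    (hanti : ∀ μ ∈ V, ∀ ν ∈ V, L μ ν = -(q θ μ ν) • L ν μ)
    (hLval : ∀ μ ∈ V, ∀ ν ∈ V, ∀ σ ∈ V,
      L μ ν (b σ) = (if σ = -ν then (1:ℂ) else 0) • b μ
        - q θ μ ν • ((if σ = -μ then (1:ℂ) else 0) • b ν))
    (hLeib : ∀ μ ∈ V, ∀ ν ∈ V, ∀ (m : ℤ × ℤ) (x y : A), x ∈ 𝒜 m →
      L μ ν (x * y) = L μ ν x * y + Q7 θ (dbl μ + dbl ν) m • (x * L μ ν y))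
    (hLrel : ∀ μ ∈ V, ∀ ν ∈ V, ∀ τ ∈ V, ∀ σ ∈ V,
      L μ ν * L τ σ - q θ (μ + ν) (τ + σ) • (L τ σ * L μ ν)
        = (if τ = -ν then (1:ℂ) else 0) • L μ σ
          - q θ μ ν • ((if τ = -μ then (1:ℂ) else 0) • L ν σ)
          - q θ τ σ • ((if σ = -ν then (1:ℂ) else 0) • L μ τ
              - q θ μ ν • ((if σ = -μ then (1:ℂ) else 0) • L ν τ)))
    {μ ν : ℤ × ℤ} (hμ : μ ∈ V) (hν : ν ∈ V) :
    connection b L μ * connection b L ν - q θ μ ν • (connection b L ν * connection b L μ) =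
      L μ ν := by
  have hsecond := eq_add_of_sub_eq ((secondOrderPart_sub_smul_swap hcomm μ ν).trans
    (sum_sum_smul_lmul_mul_braided_commutator hcomm hsph hanti hLrel hμ hν))
  have hqL : q θ μ ν • L ν μ = -L μ ν := by
    rw [hanti ν hν μ hμ, smul_smul, mul_neg, q_mul_q_eq_one (by simp [wedge]; ring), neg_smul,
      one_smul]
  rw [connection_mul_connection hb hcomm hsph hLval hLeib hμ,
    connection_mul_connection hb hcomm hsph hLval hLeib hν, hsecond, smul_add, smul_sub, hqL]
  abel

end Instanton

/- For the equivariant connection `ρ`, `⟦ρ,ρ⟧(T_μ,T_ν)` is the braided commutator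
`ρ(T_μ)ρ(T_ν) − λ^{2μ∧ν} ρ(T_ν)ρ(T_μ)` and `ρ([T_μ,T_ν]) = b_μ ρ(T_ν) − λ^{2μ∧ν} b_ν ρ(T_μ)`,
so (iii) is `−Ω(T_μ,T_ν) = Y_{μ,ν}`. -/
theorem instanton_connection_curvature_general
    (θ : ℝ)
    (A : Type*) [Ring A] [Algebra ℂ A]
    (𝒜 : ℤ × ℤ → Submodule ℂ A)
    -- generators `b_μ` of the coinvariant subalgebra `O(S^4_θ)` (`b_μ* = b_{−μ}`)
    (b : ℤ × ℤ → A)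
    (hb : ∀ μ ∈ V, b μ ∈ 𝒜 (dbl μ))
    (hcomm : ∀ μ ∈ V, ∀ ν ∈ V, b μ * b ν = q θ μ ν • (b ν * b μ))
    (hsph : ∑ μ ∈ V, b (-μ) * b μ = 1)
    -- the `O(SU(2))`-equivariant braided derivations `L_{μ,ν}` of `O(S^7_θ)`
    (L : ℤ × ℤ → ℤ × ℤ → Module.End ℂ A)
    (hanti : ∀ μ ∈ V, ∀ ν ∈ V, L μ ν = -(q θ μ ν) • L ν μ)
    (hLval : ∀ μ ∈ V, ∀ ν ∈ V, ∀ σ ∈ V,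
      L μ ν (b σ) = (if σ = -ν then (1:ℂ) else 0) • b μ
        - q θ μ ν • ((if σ = -μ then (1:ℂ) else 0) • b ν))
    (hLeib : ∀ μ ∈ V, ∀ ν ∈ V, ∀ (m : ℤ × ℤ) (x y : A), x ∈ 𝒜 m →
      L μ ν (x * y) = L μ ν x * y + Q7 θ (dbl μ + dbl ν) m • (x * L μ ν y))
    -- the `so_θ(5)` relations
    (hLrel : ∀ μ ∈ V, ∀ ν ∈ V, ∀ τ ∈ V, ∀ σ ∈ V,
      L μ ν ∘ₗ L τ σ - q θ (μ + ν) (τ + σ) • (L τ σ ∘ₗ L μ ν)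
        = (if τ = -ν then (1:ℂ) else 0) • L μ σ
          - q θ μ ν • ((if τ = -μ then (1:ℂ) else 0) • L ν σ)
          - q θ τ σ • ((if σ = -ν then (1:ℂ) else 0) • L μ τ
              - q θ μ ν • ((if σ = -μ then (1:ℂ) else 0) • L ν τ)))
    -- the horizontal lifts `ρ(T_ν) := Σ_μ b_μ* L_{μ,ν}`
    (rhoT : ℤ × ℤ → Module.End ℂ A)
    (hrho : ∀ ν, rhoT ν = ∑ μ ∈ V, (LinearMap.mulLeft ℂ (b (-μ))) ∘ₗ L μ ν)
    -- the vertical (gauge) generators `Y_{μ,ν}`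
    (Y : ℤ × ℤ → ℤ × ℤ → Module.End ℂ A)
    (hYdef : ∀ μ ν, Y μ ν = ∑ γ ∈ V,
      (LinearMap.mulLeft ℂ (b (-γ))) ∘ₗ
        ((LinearMap.mulLeft ℂ (b γ)) ∘ₗ L μ ν
          - q θ γ μ • ((LinearMap.mulLeft ℂ (b μ)) ∘ₗ L γ ν)
          + q θ (γ + μ) ν • ((LinearMap.mulLeft ℂ (b ν)) ∘ₗ L γ μ))) :
    -- (i) `[ρ(T_μ), ρ(T_ν)] = L_{μ,ν}`
    (∀ μ ∈ V, ∀ ν ∈ V,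
      rhoT μ ∘ₗ rhoT ν - q θ μ ν • (rhoT ν ∘ₗ rhoT μ) = L μ ν) ∧
    -- (ii) `ω(L_{μ,ν}) = L_{μ,ν} − (b_μ ρ(T_ν) − λ^{2μ∧ν} b_ν ρ(T_μ)) = Y_{μ,ν}`
    (∀ μ ∈ V, ∀ ν ∈ V,
      L μ ν - ((LinearMap.mulLeft ℂ (b μ)) ∘ₗ rhoT ν
          - q θ μ ν • ((LinearMap.mulLeft ℂ (b ν)) ∘ₗ rhoT μ)) = Y μ ν) ∧
    -- (iii) `−Ω(T_μ,T_ν) = −(ρ([T_μ,T_ν]) − [ρ(T_μ),ρ(T_ν)]) = Y_{μ,ν}`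
    (∀ μ ∈ V, ∀ ν ∈ V,
      - (((LinearMap.mulLeft ℂ (b μ)) ∘ₗ rhoT ν
            - q θ μ ν • ((LinearMap.mulLeft ℂ (b ν)) ∘ₗ rhoT μ))
          - (rhoT μ ∘ₗ rhoT ν - q θ μ ν • (rhoT ν ∘ₗ rhoT μ))) = Y μ ν) := by
  simp only [← Module.End.mul_eq_comp, LinearMap.mulLeft_eq_lmul] at hrho hYdef hLrel ⊢
  obtain rfl : rhoT = connection b L := funext hrho
  have hcommutator : ∀ μ ∈ V, ∀ ν ∈ V, connection b L μ * connection b L ν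
      - q θ μ ν • (connection b L ν * connection b L μ) = L μ ν := fun μ hμ ν hν =>
    connection_commutator hb hcomm hsph hanti hLval hLeib hLrel hμ hν
  have hvertical : ∀ μ ∈ V, ∀ ν ∈ V, L μ ν - (Algebra.lmul ℂ A (b μ) * connection b L ν
      - q θ μ ν • (Algebra.lmul ℂ A (b ν) * connection b L μ)) = Y μ ν := fun μ hμ ν hν =>
    (sub_lmul_mul_connection_eq_sum hsph hcomm hμ hν).trans (hYdef μ ν).symm
  refine ⟨hcommutator, hvertical, fun μ hμ ν hν => ?_⟩
  rw [neg_sub, hcommutator μ hμ ν hν, hvertical μ hμ ν hν]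

theorem instanton_connection_curvature
    (θ : ℝ)
    (A : Type*) [Ring A] [Algebra ℂ A]
    (𝒜 : ℤ × ℤ → Submodule ℂ A) [GradedAlgebra 𝒜]
    -- generators `b_μ` of the coinvariant subalgebra `O(S^4_θ)` (`b_μ* = b_{−μ}`)
    (b : ℤ × ℤ → A)
    (hb : ∀ μ ∈ V, b μ ∈ 𝒜 (dbl μ))
    (hcomm : ∀ μ ∈ V, ∀ ν ∈ V, b μ * b ν = q θ μ ν • (b ν * b μ))
    (hsph : ∑ μ ∈ V, b (-μ) * b μ = 1)
    -- the `O(SU(2))`-equivariant braided derivations `L_{μ,ν}` of `O(S^7_θ)`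
    (L : ℤ × ℤ → ℤ × ℤ → Module.End ℂ A)
    (hanti : ∀ μ ∈ V, ∀ ν ∈ V, L μ ν = -(q θ μ ν) • L ν μ)
    (hLval : ∀ μ ∈ V, ∀ ν ∈ V, ∀ σ ∈ V,
      L μ ν (b σ) = (if σ = -ν then (1:ℂ) else 0) • b μ
        - q θ μ ν • ((if σ = -μ then (1:ℂ) else 0) • b ν))
    (hLeib : ∀ μ ∈ V, ∀ ν ∈ V, ∀ (m : ℤ × ℤ) (x y : A), x ∈ 𝒜 m →
      L μ ν (x * y) = L μ ν x * y + Q7 θ (dbl μ + dbl ν) m • (x * L μ ν y))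
    -- the `so_θ(5)` relations
    (hLrel : ∀ μ ∈ V, ∀ ν ∈ V, ∀ τ ∈ V, ∀ σ ∈ V,
      L μ ν ∘ₗ L τ σ - q θ (μ + ν) (τ + σ) • (L τ σ ∘ₗ L μ ν)
        = (if τ = -ν then (1:ℂ) else 0) • L μ σ
          - q θ μ ν • ((if τ = -μ then (1:ℂ) else 0) • L ν σ)
          - q θ τ σ • ((if σ = -ν then (1:ℂ) else 0) • L μ τ
              - q θ μ ν • ((if σ = -μ then (1:ℂ) else 0) • L ν τ)))
    -- the horizontal lifts `ρ(T_ν) := Σ_μ b_μ* L_{μ,ν}`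
    (rhoT : ℤ × ℤ → Module.End ℂ A)
    (hrho : ∀ ν, rhoT ν = ∑ μ ∈ V, (LinearMap.mulLeft ℂ (b (-μ))) ∘ₗ L μ ν)
    -- the vertical (gauge) generators `Y_{μ,ν}`
    (Y : ℤ × ℤ → ℤ × ℤ → Module.End ℂ A)
    (hYdef : ∀ μ ν, Y μ ν = ∑ γ ∈ V,
      (LinearMap.mulLeft ℂ (b (-γ))) ∘ₗ
        ((LinearMap.mulLeft ℂ (b γ)) ∘ₗ L μ ν
          - q θ γ μ • ((LinearMap.mulLeft ℂ (b μ)) ∘ₗ L γ ν)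
          + q θ (γ + μ) ν • ((LinearMap.mulLeft ℂ (b ν)) ∘ₗ L γ μ))) :
    -- (i) `[ρ(T_μ), ρ(T_ν)] = L_{μ,ν}`
    (∀ μ ∈ V, ∀ ν ∈ V,
      rhoT μ ∘ₗ rhoT ν - q θ μ ν • (rhoT ν ∘ₗ rhoT μ) = L μ ν) ∧
    -- (ii) `ω(L_{μ,ν}) = L_{μ,ν} − (b_μ ρ(T_ν) − λ^{2μ∧ν} b_ν ρ(T_μ)) = Y_{μ,ν}`
    (∀ μ ∈ V, ∀ ν ∈ V,
      L μ ν - ((LinearMap.mulLeft ℂ (b μ)) ∘ₗ rhoT ν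
          - q θ μ ν • ((LinearMap.mulLeft ℂ (b ν)) ∘ₗ rhoT μ)) = Y μ ν) ∧
    -- (iii) `−Ω(T_μ,T_ν) = −(ρ([T_μ,T_ν]) − [ρ(T_μ),ρ(T_ν)]) = Y_{μ,ν}`
    (∀ μ ∈ V, ∀ ν ∈ V,
      - (((LinearMap.mulLeft ℂ (b μ)) ∘ₗ rhoT ν
            - q θ μ ν • ((LinearMap.mulLeft ℂ (b ν)) ∘ₗ rhoT μ))
          - (rhoT μ ∘ₗ rhoT ν - q θ μ ν • (rhoT ν ∘ₗ rhoT μ))) = Y μ ν) :=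
  instanton_connection_curvature_general θ A 𝒜 b hb hcomm hsph L hanti hLval hLeib hLrel rhoT hrho Y
    hYdef

end Statement9
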